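/- arXiv:math/0701848 — 5 statements merged into one kernel-verified Lean document; each statement's English description precedes it below -/
import Mathlib

section
/- With the notation of the previous statement, equality ∫_Y |v|² d(f_#μ) = ∫_X |u|² dμ holds if and only if u = v ∘ f holds μ-almost everywhere on X. -/
/-!
The density condition says precisely that `v ∘ f` is the conditional expectation `μ[u|σ(f)]`.
By the pull-out property `∫ ⟪μ[u|σ(f)], u⟫ = ∫ ‖μ[u|σ(f)]‖²`, hence the Pythagorean identity
`∫ ‖u‖² = ∫ ‖μ[u|σ(f)]‖² + ∫ ‖u - μ[u|σ(f)]‖²`. The two sides of the equality therefore differ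
by `∫ ‖u - v ∘ f‖²`, which vanishes iff `u = v ∘ f` almost everywhere.
-/

open MeasureTheory
open scoped ENNReal

namespace MeasureTheory

section ConditionalExpectation

variable {Ω E : Type*} {m mΩ : MeasurableSpace Ω} {μ : Measure Ω} [NormedAddCommGroup E]

lemma MemLp.lintegral_nnnorm_sq_eq_ofReal_integral {f : Ω → E} (hf : MemLp f 2 μ) :
    ∫⁻ x, (‖f x‖₊ : ℝ≥0∞) ^ 2 ∂μ = ENNReal.ofReal (∫ x, ‖f x‖ ^ 2 ∂μ) := by
  rw [ofReal_integral_eq_lintegral_ofReal (hf.integrable_norm_pow two_ne_zero)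
    (.of_forall fun _ => by positivity)]
  simp [ENNReal.ofReal_pow, enorm_eq_nnnorm]

variable [InnerProductSpace ℝ E]

lemma MemLp.integrable_inner {f g : Ω → E} (hf : MemLp f 2 μ) (hg : MemLp g 2 μ) :
    Integrable (fun x => inner ℝ (f x) (g x)) μ :=
  memLp_one_iff_integrable.1 ((innerSL ℝ).memLp_of_bilin 1 hf hg)

variable [CompleteSpace E] [IsFiniteMeasure μ]

lemma integral_inner_condExp_eq_integral_norm_sq (hm : m ≤ mΩ) {u : Ω → E}
    (hu : MemLp u 2 μ) :
    ∫ x, inner ℝ (μ[u|m] x) (u x) ∂μ = ∫ x, ‖μ[u|m] x‖ ^ 2 ∂μ :=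
  calc ∫ x, inner ℝ (μ[u|m] x) (u x) ∂μ
      = ∫ x, μ[fun x => inner ℝ (μ[u|m] x) (u x) | m] x ∂μ := (integral_condExp hm).symm
    _ = ∫ x, inner ℝ (μ[u|m] x) (μ[u|m] x) ∂μ :=
      integral_congr_ae <| condExp_bilin_of_stronglyMeasurable_left (innerSL ℝ)
        stronglyMeasurable_condExp ((hu.condExp one_le_two).integrable_inner hu)
        (hu.integrable one_le_two)
    _ = ∫ x, ‖μ[u|m] x‖ ^ 2 ∂μ := by simp only [real_inner_self_eq_norm_sq]

lemma integral_norm_sq_eq_integral_norm_condExp_sq_add (hm : m ≤ mΩ) {u : Ω → E}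
    (hu : MemLp u 2 μ) :
    ∫ x, ‖u x‖ ^ 2 ∂μ = ∫ x, ‖μ[u|m] x‖ ^ 2 ∂μ + ∫ x, ‖u x - μ[u|m] x‖ ^ 2 ∂μ := by
  have hc : MemLp μ[u|m] 2 μ := hu.condExp one_le_two
  have h_cross : Integrable (fun x => 2 * inner ℝ (μ[u|m] x) (u x)) μ :=
    (hc.integrable_inner hu).const_mul 2
  have h_diff : Integrable (fun x => ‖u x‖ ^ 2 - 2 * inner ℝ (μ[u|m] x) (u x)) μ :=
    (hu.integrable_norm_pow two_ne_zero).sub h_cross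
  have h_expand : ∀ x, ‖u x - μ[u|m] x‖ ^ 2
      = ‖u x‖ ^ 2 - 2 * inner ℝ (μ[u|m] x) (u x) + ‖μ[u|m] x‖ ^ 2 := fun x => by
    rw [norm_sub_sq_real, real_inner_comm]
  simp_rw [h_expand]
  rw [integral_add h_diff (hc.integrable_norm_pow two_ne_zero),
    integral_sub (hu.integrable_norm_pow two_ne_zero) h_cross, integral_const_mul,
    integral_inner_condExp_eq_integral_norm_sq hm hu]
  ring

lemma lintegral_nnnorm_condExp_sq_eq_iff (hm : m ≤ mΩ) {u : Ω → E} (hu : MemLp u 2 μ) :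
    ∫⁻ x, (‖μ[u|m] x‖₊ : ℝ≥0∞) ^ 2 ∂μ = ∫⁻ x, (‖u x‖₊ : ℝ≥0∞) ^ 2 ∂μ ↔ u =ᵐ[μ] μ[u|m] := by
  have hc : MemLp μ[u|m] 2 μ := hu.condExp one_le_two
  have h_diff : Integrable (fun x => ‖u x - μ[u|m] x‖ ^ 2) μ :=
    (hu.sub hc).integrable_norm_pow two_ne_zero
  rw [hc.lintegral_nnnorm_sq_eq_ofReal_integral, hu.lintegral_nnnorm_sq_eq_ofReal_integral,
    ENNReal.ofReal_eq_ofReal_iff (integral_nonneg fun _ => by positivity)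
      (integral_nonneg fun _ => by positivity),
    integral_norm_sq_eq_integral_norm_condExp_sq_add hm hu, left_eq_add,
    integral_eq_zero_iff_of_nonneg (fun _ => by positivity) h_diff]
  refine Filter.eventually_congr (.of_forall fun x => ?_)
  simp [sub_eq_zero]

end ConditionalExpectation

section Pushforward

variable {X Y E : Type*} [MeasurableSpace X] [MeasurableSpace Y] [NormedAddCommGroup E]
  {μ : Measure X} {f : X → Y} {v : Y → E}

lemma AEStronglyMeasurable.comp_comap (hv : AEStronglyMeasurable v (μ.map f))
    (hf : AEMeasurable f μ) :
    AEStronglyMeasurable[MeasurableSpace.comap f ‹_›] (fun x => v (f x)) μ :=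
  ⟨fun x => hv.mk v (f x), hv.stronglyMeasurable_mk.comp_measurable (comap_measurable f),
    ae_of_ae_map hf hv.ae_eq_mk⟩

variable [NormedSpace ℝ E] [CompleteSpace E]

lemma comp_ae_eq_condExp_comap_of_withDensityᵥ_map [IsFiniteMeasure μ] (hf : Measurable f)
    {u : X → E} (hu : Integrable u μ) (hv : Integrable v (μ.map f))
    (hdens : (μ.map f).withDensityᵥ v = (μ.withDensityᵥ u).map f) :
    (fun x => v (f x)) =ᵐ[μ] μ[u | MeasurableSpace.comap f ‹_›] := by
  refine ae_eq_condExp_of_forall_setIntegral_eq hf.comap_le hu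
    (fun _ _ _ => (hv.comp_measurable hf).integrableOn) (fun s hs _ => ?_)
    (hv.1.comp_comap hf.aemeasurable)
  obtain ⟨t, ht, rfl⟩ := hs
  rw [← setIntegral_map ht hv.1 hf.aemeasurable, ← withDensityᵥ_apply hv ht, hdens,
    VectorMeasure.map_apply _ hf ht, withDensityᵥ_apply hu (hf ht)]

end Pushforward

end MeasureTheory

theorem density_pushforward_l2_eq_iff_general
    {X Y : Type*} [MeasurableSpace X] [MeasurableSpace Y]
    {m : ℕ} (μ : Measure X) [IsProbabilityMeasure μ]
    (u : X → EuclideanSpace ℝ (Fin m)) (hu : MemLp u 2 μ)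
    (f : X → Y) (hf : Measurable f)
    (v : Y → EuclideanSpace ℝ (Fin m)) (hv : MemLp v 2 (μ.map f))
    (hdens : (μ.map f).withDensityᵥ v = (μ.withDensityᵥ u).map f) :
    (∫⁻ y, (‖v y‖₊ : ℝ≥0∞) ^ 2 ∂(μ.map f) = ∫⁻ x, (‖u x‖₊ : ℝ≥0∞) ^ 2 ∂μ) ↔
      u =ᵐ[μ] fun x => v (f x) := by
  have hce := comp_ae_eq_condExp_comap_of_withDensityᵥ_map hf (hu.integrable one_le_two)
    (hv.integrable one_le_two) hdens
  have h_lhs : ∫⁻ y, (‖v y‖₊ : ℝ≥0∞) ^ 2 ∂(μ.map f)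
      = ∫⁻ x, (‖μ[u | MeasurableSpace.comap f ‹_›] x‖₊ : ℝ≥0∞) ^ 2 ∂μ := by
    rw [lintegral_map' (hv.1.aemeasurable.nnnorm.coe_nnreal_ennreal.pow_const 2)
      hf.aemeasurable]
    exact lintegral_congr_ae (hce.fun_comp fun z => (‖z‖₊ : ℝ≥0∞) ^ 2)
  rw [h_lhs, lintegral_nnnorm_condExp_sq_eq_iff hf.comap_le hu]
  exact ⟨fun h => h.trans hce.symm, fun h => h.trans hce⟩

/-- **Equality case in Lemma 2.4 of [AmLiSa] (`ljensen`)**: with `v` the density of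
`f_#(u μ)` with respect to `f_# μ`, equality `∫ |v|² d f_#μ = ∫ |u|² dμ` holds if and
only if `u = v ∘ f` μ-almost everywhere. -/
theorem density_pushforward_l2_eq_iff
    {X Y : Type*} [MeasurableSpace X] [TopologicalSpace X] [PolishSpace X] [BorelSpace X]
    [MeasurableSpace Y] [TopologicalSpace Y] [PolishSpace Y] [BorelSpace Y]
    {m : ℕ} (μ : Measure X) [IsProbabilityMeasure μ]
    (u : X → EuclideanSpace ℝ (Fin m)) (hu : MemLp u 2 μ)
    (f : X → Y) (hf : Measurable f)
    (v : Y → EuclideanSpace ℝ (Fin m)) (hv : MemLp v 2 (μ.map f))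
    (hdens : (μ.map f).withDensityᵥ v = (μ.withDensityᵥ u).map f) :
    (∫⁻ y, (‖v y‖₊ : ℝ≥0∞) ^ 2 ∂(μ.map f) = ∫⁻ x, (‖u x‖₊ : ℝ≥0∞) ^ 2 ∂μ) ↔
      u =ᵐ[μ] fun x => v (f x) :=
  density_pushforward_l2_eq_iff_general μ u hu f hf v hv hdens
end

section
/- For any measure-preserving plans η, γ ∈ Γ(D), one has δ̄(η,γ) ≥ W₂(η,γ), where W₂ is the quadratic Wasserstein distance on probability measures on D × D induced by the cost c((x₁,x₂),(y₁,y₂)) = d_D²(x₁,y₁)/2 + d_D²(x₂,y₂)/2. -/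
open MeasureTheory Set Filter
open scoped ENNReal NNReal

noncomputable section


abbrev Euc (n : ℕ) := EuclideanSpace ℝ (Fin n)

/-- A plan in `Γ(D)`: probability measure on `D × D` with both marginals `μD`. -/
def IsPlan {n : ℕ} (μD : Measure (Euc n)) (γ : Measure (Euc n × Euc n)) : Prop :=
  IsProbabilityMeasure γ ∧ γ.map Prod.fst = μD ∧ γ.map Prod.snd = μD

/-- Absolute continuity of a curve on `[0,1]`. -/
def AbsCts {n : ℕ} (ω : ℝ → Euc n) : Prop :=
  IntegrableOn (deriv ω) (Icc (0:ℝ) 1) ∧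
  ∀ t ∈ Icc (0:ℝ) 1, ω t = ω 0 + ∫ s in Ioc (0:ℝ) t, deriv ω s

open Classical in
/-- Kinetic action of a curve: `∫₀¹ ½|ω̇|²` if absolutely continuous, `+∞` otherwise. -/
def pathAction {n : ℕ} (ω : ℝ → Euc n) : ℝ≥0∞ :=
  if _h : AbsCts ω then ∫⁻ t in Icc (0:ℝ) 1, ENNReal.ofReal (‖deriv ω t‖ ^ 2 / 2) else ⊤

/-- Generalized incompressible flow on `[0,1]` connecting the plan `η` to the plan `γ`. -/
def IsGenFlow {n : ℕ} (μD : Measure (Euc n)) (η γ : Measure (Euc n × Euc n))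
    (P : Measure ((ℝ → Euc n) × Euc n)) : Prop :=
  IsProbabilityMeasure P ∧
  (∀ t ∈ Icc (0:ℝ) 1, P.map (fun p => p.1 t) = μD) ∧
  P.map (fun p => (p.1 0, p.2)) = η ∧
  P.map (fun p => (p.1 1, p.2)) = γ

/-- Action of a generalized flow. -/
def flowAction {n : ℕ} (P : Measure ((ℝ → Euc n) × Euc n)) : ℝ≥0∞ :=
  ∫⁻ p, pathAction p.1 ∂P

/-- Squared relaxed distance `δ̄²(η,γ)`. -/
def deltaSq {n : ℕ} (μD : Measure (Euc n)) (η γ : Measure (Euc n × Euc n)) : ℝ≥0∞ :=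
  ⨅ P : {P : Measure ((ℝ → Euc n) × Euc n) // IsGenFlow μD η γ P}, flowAction P.1

end

/-- Squared quadratic Wasserstein distance on `P(D × D)` with cost
`c((x₁,x₂),(y₁,y₂)) = d(x₁,y₁)²/2 + d(x₂,y₂)²/2`. -/
noncomputable def W2sq {n : ℕ} (η γ : Measure (Euc n × Euc n)) : ℝ≥0∞ :=
  ⨅ π : {π : Measure ((Euc n × Euc n) × (Euc n × Euc n)) //
      π.map Prod.fst = η ∧ π.map Prod.snd = γ},
    ∫⁻ p, ENNReal.ofReal (dist p.1.1 p.2.1 ^ 2 / 2 + dist p.1.2 p.2.2 ^ 2 / 2) ∂π.1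


open MeasureTheory Set Filter
open scoped ENNReal NNReal

private lemma ofReal_dist_sq_le_pathAction {n : ℕ} (ω : ℝ → Euc n) :
    ENNReal.ofReal (dist (ω 0) (ω 1) ^ 2 / 2) ≤ pathAction ω := by
  by_cases h : AbsCts ω
  · rw [pathAction, dif_pos h]
    by_cases htop : (∫⁻ t in Icc (0:ℝ) 1, ENNReal.ofReal (‖deriv ω t‖ ^ 2 / 2)) = ⊤
    · rw [htop]; exact le_top
    haveI : IsProbabilityMeasure (volume.restrict (Icc (0:ℝ) 1)) := by constructor; simp
    set μ' := volume.restrict (Icc (0:ℝ) 1) with hμ'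
    have hf_int : Integrable (fun t => ‖deriv ω t‖) μ' := h.1.norm
    have hmg : Measurable (fun t => ‖deriv ω t‖ ^ 2 / 2) :=
      ((measurable_deriv ω).norm.pow_const 2).div_const 2
    have hg_int : Integrable (fun t => ‖deriv ω t‖ ^ 2 / 2) μ' := by
      refine ⟨hmg.aestronglyMeasurable, ?_⟩
      rw [hasFiniteIntegral_iff_ofReal (Filter.Eventually.of_forall fun t => by positivity)]
      exact lt_top_iff_ne_top.2 htop
    have hgi : Integrable ((fun x : ℝ => x ^ 2) ∘ fun t => ‖deriv ω t‖) μ' := by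
      have : ((fun x : ℝ => x ^ 2) ∘ fun t => ‖deriv ω t‖)
          = fun t => 2 * (‖deriv ω t‖ ^ 2 / 2) := by
        funext t; simp [Function.comp]; ring
      rw [this]; exact hg_int.const_mul 2
    have jensen := (Even.convexOn_pow (even_two) (𝕜 := ℝ)).map_average_le
      (by fun_prop) isClosed_univ (Filter.Eventually.of_forall fun t => mem_univ _) hf_int hgi
    rw [average_eq_integral, average_eq_integral] at jensen
    have hdist : dist (ω 0) (ω 1) ≤ ∫ t, ‖deriv ω t‖ ∂μ' := by
      have h1 : ω 1 = ω 0 + ∫ s in Ioc (0:ℝ) 1, deriv ω s := h.2 1 (by norm_num)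
      rw [dist_comm, dist_eq_norm, h1]
      simp only [add_sub_cancel_left]
      rw [hμ', ← integral_Icc_eq_integral_Ioc]
      exact norm_integral_le_integral_norm _
    have hsq : dist (ω 0) (ω 1) ^ 2 ≤ ∫ t, ‖deriv ω t‖ ^ 2 ∂μ' := by
      calc dist (ω 0) (ω 1) ^ 2 ≤ (∫ t, ‖deriv ω t‖ ∂μ') ^ 2 :=
            pow_le_pow_left₀ dist_nonneg hdist 2
        _ ≤ ∫ t, ‖deriv ω t‖ ^ 2 ∂μ' := jensen
    calc ENNReal.ofReal (dist (ω 0) (ω 1) ^ 2 / 2)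
        ≤ ENNReal.ofReal (∫ t, ‖deriv ω t‖ ^ 2 / 2 ∂μ') := by
          apply ENNReal.ofReal_le_ofReal
          rw [integral_div]
          linarith
      _ = ∫⁻ t, ENNReal.ofReal (‖deriv ω t‖ ^ 2 / 2) ∂μ' :=
          ofReal_integral_eq_lintegral_ofReal hg_int
            (Filter.Eventually.of_forall fun t => by positivity)
  · rw [pathAction, dif_neg h]; exact le_top

/-- **`δ̄ ≥ W₂`** (from Proposition `propotopo`): the relaxed distance between two
measure-preserving plans dominates the quadratic Wasserstein distance. -/
theorem W2_le_deltaSq {n : ℕ} (D : Set (Euc n)) (hD : IsCompact D)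
    (μD : Measure (Euc n)) [IsProbabilityMeasure μD] (hμD : ∀ᵐ x ∂μD, x ∈ D)
    (η γ : Measure (Euc n × Euc n)) (hη : IsPlan μD η) (hγ : IsPlan μD γ) :
    W2sq η γ ≤ deltaSq μD η γ := by
  refine le_iInf fun ⟨P, hPprob, hPt, hP0, hP1⟩ => ?_
  set T : (ℝ → Euc n) × Euc n → (Euc n × Euc n) × (Euc n × Euc n) :=
    fun p => ((p.1 0, p.2), (p.1 1, p.2)) with hT
  have hTm : Measurable T :=
    (((measurable_pi_apply 0).comp measurable_fst).prodMk measurable_snd).prodMk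
      (((measurable_pi_apply 1).comp measurable_fst).prodMk measurable_snd)
  have hm1 : (P.map T).map Prod.fst = η := by
    rw [Measure.map_map measurable_fst hTm]; exact hP0
  have hm2 : (P.map T).map Prod.snd = γ := by
    rw [Measure.map_map measurable_snd hTm]; exact hP1
  have hc : Measurable fun p : (Euc n × Euc n) × (Euc n × Euc n) =>
      ENNReal.ofReal (dist p.1.1 p.2.1 ^ 2 / 2 + dist p.1.2 p.2.2 ^ 2 / 2) := by
    fun_prop
  refine le_trans (iInf_le _ ⟨P.map T, hm1, hm2⟩) ?_
  rw [lintegral_map hc hTm]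
  refine lintegral_mono fun p => ?_
  simp only [hT, dist_self]
  norm_num
  exact ofReal_dist_sq_le_pathAction p.1
end

section
/- The relaxed distance δ̄ on Γ(D) is right invariant under S^i(D): for every η, γ ∈ Γ(D) and every μ_D-essentially injective measure-preserving map h ∈ S^i(D), δ̄(η ∘ h, γ ∘ h) = δ̄(η, γ), where η ∘ h denotes the plan with disintegration (η ∘ h)_a = η_{h(a)}. -/
open MeasureTheory Set Filter
open scoped ENNReal NNReal

noncomputable section


/-! Relabelling the Lagrangian label of a generalized flow by `g` turns a flow from `η` to `γ`
into a flow from `(id × g)_# η` to `(id × g)_# γ` and leaves the path of every particle, hence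
the action, unchanged; so `δ̄` can only decrease. Relabelling back by the a.e. inverse `h`
recovers `η` and `γ` (their second marginal is `μD`), which gives the reverse inequality. -/

theorem MeasureTheory.Measure.map_prodMap_id_map_prodMap_id_eq_self {X Y Z : Type*}
    [MeasurableSpace X] [MeasurableSpace Y] [MeasurableSpace Z] {μ : Measure (X × Y)}
    {g : Y → Z} {h : Z → Y} (hg : Measurable g)
    (hh : Measurable h) (hinv : ∀ᵐ y ∂μ.map Prod.snd, h (g y) = y) :
    (μ.map (Prod.map id g)).map (Prod.map id h) = μ := by
  have hinv' : Prod.map id h ∘ Prod.map id g =ᵐ[μ] id := by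
    filter_upwards [ae_of_ae_map measurable_snd.aemeasurable hinv] with p hp
    exact Prod.ext rfl hp
  rw [Measure.map_map (measurable_id.prodMap hh) (measurable_id.prodMap hg),
    Measure.map_congr hinv', Measure.map_id]

section

variable {n : ℕ} {μD : Measure (Euc n)} {g : Euc n → Euc n}

theorem IsGenFlow.map_prodMap_id {η γ : Measure (Euc n × Euc n)}
    {P : Measure ((ℝ → Euc n) × Euc n)} (hP : IsGenFlow μD η γ P) (hg : Measurable g) :
    IsGenFlow μD (η.map (Prod.map id g)) (γ.map (Prod.map id g)) (P.map (Prod.map id g)) := by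
  obtain ⟨hprob, hmarg, rfl, rfl⟩ := hP
  have hg' : Measurable (Prod.map id g : (ℝ → Euc n) × Euc n → _) :=
    measurable_id.prodMap hg
  have heval (t : ℝ) : Measurable fun p : (ℝ → Euc n) × Euc n => (p.1 t, p.2) :=
    ((measurable_pi_apply t).comp measurable_fst).prodMk measurable_snd
  refine ⟨Measure.isProbabilityMeasure_map hg'.aemeasurable, fun t ht => ?_, ?_, ?_⟩
  · rw [Measure.map_map (g := fun p : (ℝ → Euc n) × Euc n => p.1 t)
      ((measurable_pi_apply t).comp measurable_fst) hg']
    exact hmarg t ht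
  · rw [Measure.map_map (heval 0) hg', Measure.map_map (measurable_id.prodMap hg) (heval 0)]
    rfl
  · rw [Measure.map_map (heval 1) hg', Measure.map_map (measurable_id.prodMap hg) (heval 1)]
    rfl

theorem flowAction_map_prodMap_id_le (P : Measure ((ℝ → Euc n) × Euc n)) (g : Euc n → Euc n) :
    flowAction (P.map (Prod.map id g)) ≤ flowAction P :=
  lintegral_map_le (fun p : (ℝ → Euc n) × Euc n => pathAction p.1) _

theorem deltaSq_map_prodMap_id_le (η γ : Measure (Euc n × Euc n)) (hg : Measurable g) :
    deltaSq μD (η.map (Prod.map id g)) (γ.map (Prod.map id g)) ≤ deltaSq μD η γ :=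
  le_iInf fun P =>
    (iInf_le _ ⟨P.1.map (Prod.map id g), P.2.map_prodMap_id hg⟩).trans
      (flowAction_map_prodMap_id_le P.1 g)

end

theorem deltaSq_right_invariant_general {n : ℕ}
    (μD : Measure (Euc n))
    (h g : Euc n → Euc n) (hh : Measurable h) (hg : Measurable g)
    (hinv₂ : ∀ᵐ x ∂μD, h (g x) = x)
    (η γ : Measure (Euc n × Euc n)) (hη : IsPlan μD η) (hγ : IsPlan μD γ) :
    deltaSq μD (η.map (Prod.map id g)) (γ.map (Prod.map id g)) = deltaSq μD η γ := by
  refine le_antisymm (deltaSq_map_prodMap_id_le η γ hg) ?_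
  have hη_back : (η.map (Prod.map id g)).map (Prod.map id h) = η :=
    Measure.map_prodMap_id_map_prodMap_id_eq_self hg hh (hη.2.2 ▸ hinv₂)
  have hγ_back : (γ.map (Prod.map id g)).map (Prod.map id h) = γ :=
    Measure.map_prodMap_id_map_prodMap_id_eq_self hg hh (hγ.2.2 ▸ hinv₂)
  calc deltaSq μD η γ
      = deltaSq μD ((η.map (Prod.map id g)).map (Prod.map id h))
          ((γ.map (Prod.map id g)).map (Prod.map id h)) := by rw [hη_back, hγ_back]
    _ ≤ deltaSq μD (η.map (Prod.map id g)) (γ.map (Prod.map id g)) :=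
      deltaSq_map_prodMap_id_le _ _ hh

/-- **Right invariance of `δ̄` under `Sⁱ(D)`** (Proposition `propotopo`): if `h` is a
μ_D-essentially injective measure-preserving map with μ_D-a.e. inverse `g`, then
`δ̄(η ∘ h, γ ∘ h) = δ̄(η, γ)`, where `η ∘ h = η_{h(a)} ⊗ μ_D = (id × g)_# η`. -/
theorem deltaSq_right_invariant {n : ℕ} (D : Set (Euc n)) (hD : IsCompact D)
    (μD : Measure (Euc n)) [IsProbabilityMeasure μD] (hμD : ∀ᵐ x ∂μD, x ∈ D)
    (h g : Euc n → Euc n) (hh : Measurable h) (hg : Measurable g)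
    (hhp : μD.map h = μD)
    (hinv₁ : ∀ᵐ x ∂μD, g (h x) = x) (hinv₂ : ∀ᵐ x ∂μD, h (g x) = x)
    (η γ : Measure (Euc n × Euc n)) (hη : IsPlan μD η) (hγ : IsPlan μD γ) :
    deltaSq μD (η.map (Prod.map id g)) (γ.map (Prod.map id g)) = deltaSq μD η γ :=
  deltaSq_right_invariant_general μD h g hh hg hinv₂ η γ hη hγ
end
end

section
/- Suppose f: D' → D is a Lipschitz measure-preserving map between compact measure spaces with probability measures μ_{D'}, μ_D, and h ∈ S(D) is a measure-preserving map of D. Then there exists a measure-preserving plan γ' ∈ Γ(D') such that (f × f)_# γ' = (i × h)_# μ_D. -/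
/-!
Disintegrate `μ'` along `f`: the conditional kernel `κ` of the graph measure `(f, id)_# μ'`
satisfies `∫ κ_y d(f_# μ')(y) = μ'`, and `κ_y` is concentrated on `f⁻¹(y)` for a.e. `y`.
Any plan `γ` between `f_# μ'` and itself then lifts to `γ' = ∫ κ_y × κ_z dγ(y, z)`: the marginals
of `γ'` are `∫ κ_y d(f_# μ') = μ'`, and `(f × f)_# (κ_y × κ_z) = δ_(y, z)` for `γ`-a.e. `(y, z)`.
The theorem is the case `γ = (i × h)_# μ`.
-/

open MeasureTheory Set ProbabilityTheory
open scoped NNReal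

namespace ProbabilityTheory

variable {α β : Type*} [MeasurableSpace α] [MeasurableSpace β] [StandardBorelSpace β] [Nonempty β]

noncomputable def fiberKernel (μ : Measure β) [IsFiniteMeasure μ] (f : β → α) : Kernel α β :=
  (μ.map fun x => (f x, x)).condKernel

instance (μ : Measure β) [IsFiniteMeasure μ] (f : β → α) : IsMarkovKernel (fiberKernel μ f) := by
  unfold fiberKernel; infer_instance

variable {μ : Measure β} [IsFiniteMeasure μ] {f : β → α}

lemma compProd_fiberKernel (hf : Measurable f) :
    μ.map f ⊗ₘ fiberKernel μ f = μ.map fun x => (f x, x) := by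
  have hfst : (μ.map fun x => (f x, x)).fst = μ.map f := by
    rw [Measure.fst, Measure.map_map measurable_fst (by fun_prop)]; rfl
  rw [fiberKernel, ← hfst, Measure.disintegrate]

lemma fiberKernel_comp_map (hf : Measurable f) : fiberKernel μ f ∘ₘ μ.map f = μ := by
  rw [← Measure.snd_compProd, compProd_fiberKernel hf, Measure.snd,
    Measure.map_map measurable_snd (by fun_prop)]
  exact Measure.map_id

lemma ae_map_fiberKernel_eq_dirac [MeasurableEq α] (hf : Measurable f) :
    ∀ᵐ y ∂μ.map f, (fiberKernel μ f y).map f = Measure.dirac y := by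
  have hgraph : ∀ᵐ p ∂(μ.map fun x => (f x, x)), f p.2 = p.1 :=
    (ae_map_iff (by fun_prop) (measurableSet_eq_fun (by fun_prop) measurable_fst)).2
      (ae_of_all _ fun _ => rfl)
  rw [← compProd_fiberKernel hf] at hgraph
  filter_upwards [Measure.ae_ae_of_ae_compProd hgraph] with y hy
  rw [Measure.map_congr hy, Measure.map_const, measure_univ, one_smul]

section LiftPlan

variable {α₁ α₂ β₁ β₂ : Type*} [MeasurableSpace α₁] [MeasurableSpace α₂]
  [MeasurableSpace β₁] [MeasurableSpace β₂] [StandardBorelSpace β₁] [Nonempty β₁]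
  [StandardBorelSpace β₂] [Nonempty β₂]
  (μ₁ : Measure β₁) [IsFiniteMeasure μ₁] (μ₂ : Measure β₂) [IsFiniteMeasure μ₂]
  (f₁ : β₁ → α₁) (f₂ : β₂ → α₂) (γ : Measure (α₁ × α₂))

noncomputable def liftPlan : Measure (β₁ × β₂) :=
  ((fiberKernel μ₁ f₁).comap Prod.fst measurable_fst ×ₖ
    (fiberKernel μ₂ f₂).comap Prod.snd measurable_snd) ∘ₘ γ

instance [IsProbabilityMeasure γ] : IsProbabilityMeasure (liftPlan μ₁ μ₂ f₁ f₂ γ) := by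
  unfold liftPlan; infer_instance

variable {μ₁ μ₂ f₁ f₂ γ}

lemma fst_liftPlan (hf₁ : Measurable f₁) (hγ : γ.fst = μ₁.map f₁) :
    (liftPlan μ₁ μ₂ f₁ f₂ γ).fst = μ₁ := by
  rw [liftPlan, Measure.fst, Measure.map_comp _ _ measurable_fst, ← Kernel.fst_eq,
    Kernel.fst_prod, ← Kernel.comp_deterministic_eq_comap, ← Measure.comp_assoc,
    Measure.deterministic_comp_eq_map, ← Measure.fst, hγ, fiberKernel_comp_map hf₁]

lemma snd_liftPlan (hf₂ : Measurable f₂) (hγ : γ.snd = μ₂.map f₂) :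
    (liftPlan μ₁ μ₂ f₁ f₂ γ).snd = μ₂ := by
  rw [liftPlan, Measure.snd, Measure.map_comp _ _ measurable_snd, ← Kernel.snd_eq,
    Kernel.snd_prod, ← Kernel.comp_deterministic_eq_comap, ← Measure.comp_assoc,
    Measure.deterministic_comp_eq_map, ← Measure.snd, hγ, fiberKernel_comp_map hf₂]

lemma map_prodMap_liftPlan [MeasurableEq α₁] [MeasurableEq α₂]
    (hf₁ : Measurable f₁) (hf₂ : Measurable f₂)
    (hγ₁ : γ.fst = μ₁.map f₁) (hγ₂ : γ.snd = μ₂.map f₂) :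
    (liftPlan μ₁ μ₂ f₁ f₂ γ).map (Prod.map f₁ f₂) = γ := by
  have h₁ : ∀ᵐ p ∂γ, (fiberKernel μ₁ f₁ p.1).map f₁ = Measure.dirac p.1 :=
    ae_of_ae_map measurable_fst.aemeasurable (hγ₁ ▸ ae_map_fiberKernel_eq_dirac hf₁)
  have h₂ : ∀ᵐ p ∂γ, (fiberKernel μ₂ f₂ p.2).map f₂ = Measure.dirac p.2 :=
    ae_of_ae_map measurable_snd.aemeasurable (hγ₂ ▸ ae_map_fiberKernel_eq_dirac hf₂)
  rw [liftPlan, Measure.map_comp _ _ (hf₁.prodMap hf₂)]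
  refine (Measure.comp_congr ?_).trans Measure.id_comp
  filter_upwards [h₁, h₂] with p hp₁ hp₂
  rw [Kernel.map_apply _ (hf₁.prodMap hf₂), Kernel.prod_apply, Kernel.comap_apply,
    Kernel.comap_apply, ← Measure.map_prod_map _ _ hf₁ hf₂, hp₁, hp₂, Measure.dirac_prod_dirac,
    Kernel.id_apply]

end LiftPlan

end ProbabilityTheory

theorem exists_lifted_plan_general {m n : ℕ}
    (μ' : Measure (EuclideanSpace ℝ (Fin m))) [IsProbabilityMeasure μ']
    (μ : Measure (EuclideanSpace ℝ (Fin n))) [IsProbabilityMeasure μ]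
    (f : EuclideanSpace ℝ (Fin m) → EuclideanSpace ℝ (Fin n)) (K : ℝ≥0)
    (hfL : LipschitzWith K f) (hfp : μ'.map f = μ)
    (h : EuclideanSpace ℝ (Fin n) → EuclideanSpace ℝ (Fin n))
    (hh : Measurable h) (hhp : μ.map h = μ) :
    ∃ γ' : Measure (EuclideanSpace ℝ (Fin m) × EuclideanSpace ℝ (Fin m)),
      IsProbabilityMeasure γ' ∧ γ'.map Prod.fst = μ' ∧ γ'.map Prod.snd = μ' ∧
      γ'.map (Prod.map f f) = μ.map (fun y => (y, h y)) := by
  have hf : Measurable f := hfL.continuous.measurable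
  have hgraph : Measurable fun y => (y, h y) := measurable_id.prodMk hh
  set γ := μ.map fun y => (y, h y)
  have : IsProbabilityMeasure γ := Measure.isProbabilityMeasure_map hgraph.aemeasurable
  have hγ₁ : γ.fst = μ'.map f := by
    rw [Measure.fst, Measure.map_map measurable_fst hgraph, hfp]
    exact Measure.map_id
  have hγ₂ : γ.snd = μ'.map f := by
    rw [Measure.snd, Measure.map_map measurable_snd hgraph, hfp]
    exact hhp
  exact ⟨liftPlan μ' μ' f f γ, inferInstance, fst_liftPlan hf hγ₁, snd_liftPlan hf hγ₂,
    map_prodMap_liftPlan hf hf hγ₁ hγ₂⟩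

/-- **Existence of a lifted plan** (from the proof of Theorem `bendi`): if
`f : D' → D` is a Lipschitz measure-preserving map between compact measure spaces
and `h ∈ S(D)` is measure preserving, then there exists a measure-preserving plan
`γ' ∈ Γ(D')` such that `(f × f)_# γ' = (i × h)_# μ_D`. -/
theorem exists_lifted_plan {m n : ℕ}
    (D' : Set (EuclideanSpace ℝ (Fin m))) (D : Set (EuclideanSpace ℝ (Fin n)))
    (hD' : IsCompact D') (hD : IsCompact D)
    (μ' : Measure (EuclideanSpace ℝ (Fin m))) [IsProbabilityMeasure μ']
    (μ : Measure (EuclideanSpace ℝ (Fin n))) [IsProbabilityMeasure μ]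
    (hμ' : ∀ᵐ x ∂μ', x ∈ D') (hμ : ∀ᵐ x ∂μ, x ∈ D)
    (f : EuclideanSpace ℝ (Fin m) → EuclideanSpace ℝ (Fin n)) (K : ℝ≥0)
    (hfL : LipschitzWith K f) (hfD : MapsTo f D' D) (hfp : μ'.map f = μ)
    (h : EuclideanSpace ℝ (Fin n) → EuclideanSpace ℝ (Fin n))
    (hh : Measurable h) (hhp : μ.map h = μ) :
    ∃ γ' : Measure (EuclideanSpace ℝ (Fin m) × EuclideanSpace ℝ (Fin m)),
      IsProbabilityMeasure γ' ∧ γ'.map Prod.fst = μ' ∧ γ'.map Prod.snd = μ' ∧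
      γ'.map (Prod.map f f) = μ.map (fun y => (y, h y)) :=
  exists_lifted_plan_general μ' μ f K hfL hfp h hh hhp
end

section
/- Let D' , D be compact subsets of Euclidean spaces with probability measures, and let f: D' → D be a Lipschitz measure-preserving map. Then sup over γ ∈ Γ(D) of δ̄_D(γ_i, γ) is at most Lip(f) times the sup over γ' ∈ Γ(D') of δ̄_{D'}(γ_i, γ'). -/
open MeasureTheory Set Filter
open scoped ENNReal NNReal

/-- The identity plan `γ_i = (i × i)_# μ_D`. -/
noncomputable def idPlan {n : ℕ} (μD : Measure (Euc n)) : Measure (Euc n × Euc n) :=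
  μD.map (fun x => (x, x))

/-!
Every plan `γ ∈ Γ(D)` lifts through `f`: disintegrating `μ'` along the fibres of `f` gives a Markov
kernel `κ` with `κ ∘ₘ f₊μ' = μ'` and `κ a` carried by `f⁻¹{a}`, and then `γ' = (κ ∥ₖ κ) ∘ₘ γ` is a
plan in `Γ(D')` with `(f × f)₊γ' = γ`. Pushing a generalized flow from `γ_i` to `γ'` forward by
`ω ↦ f ∘ ω` gives a flow from `γ_i` to `γ`. A curve `ω` of finite action is absolutely continuous,
hence so is `f ∘ ω`, whose derivative is then integrable with `|(f ∘ ω)'| ≤ Lip(f) |ω'|` a.e.;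
so the action is multiplied by at most `Lip(f)²`, and `δ̄²(γ_i, γ) ≤ Lip(f)² δ̄²(γ_i, γ')`.
-/

theorem AbsolutelyContinuousOnInterval.of_dist_le {X Y : Type*} [PseudoMetricSpace X]
    [PseudoMetricSpace Y] {g : ℝ → X} {F : ℝ → Y} {a b : ℝ}
    (hF : AbsolutelyContinuousOnInterval F a b)
    (h : ∀ x ∈ uIcc a b, ∀ y ∈ uIcc a b, dist (g x) (g y) ≤ dist (F x) (F y)) :
    AbsolutelyContinuousOnInterval g a b := by
  unfold AbsolutelyContinuousOnInterval at hF ⊢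
  refine squeeze_zero' (Eventually.of_forall fun _ ↦ Finset.sum_nonneg fun _ _ ↦ dist_nonneg)
    ?_ hF
  rw [eventually_inf_principal]
  refine Eventually.of_forall fun E hE ↦ Finset.sum_le_sum fun i hi ↦ ?_
  simp only [disjWithin, mem_ofPred_eq] at hE
  exact h _ (hE.1 i hi).1 _ (hE.1 i hi).2

theorem LipschitzWith.comp_absolutelyContinuousOnInterval {X Y : Type*}
    [PseudoMetricSpace X] [PseudoMetricSpace Y] {K : ℝ≥0} {f : X → Y} (hf : LipschitzWith K f)
    {g : ℝ → X} {a b : ℝ} (hg : AbsolutelyContinuousOnInterval g a b) :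
    AbsolutelyContinuousOnInterval (f ∘ g) a b := by
  unfold AbsolutelyContinuousOnInterval at hg ⊢
  have hKg := hg.const_mul (K : ℝ)
  rw [mul_zero] at hKg
  refine squeeze_zero (fun _ ↦ Finset.sum_nonneg fun _ _ ↦ dist_nonneg) (fun E ↦ ?_) hKg
  rw [Finset.mul_sum]
  exact Finset.sum_le_sum fun i _ ↦ hf.dist_le_mul _ _

theorem AbsolutelyContinuousOnInterval.integral_deriv_eq_sub_of_intervalIntegrable {V : Type*}
    [NormedAddCommGroup V] [NormedSpace ℝ V] [FiniteDimensional ℝ V] {f : ℝ → V} {a b : ℝ}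
    (hf : AbsolutelyContinuousOnInterval f a b)
    (hf' : IntervalIntegrable (deriv f) volume a b) :
    ∫ x in a..b, deriv f x = f b - f a := by
  -- reduce to Mathlib's real-valued FTC by testing against continuous linear functionals
  refine (SeparatingDual.eq_iff_forall_dual_eq (R := ℝ)).2 fun L ↦ ?_
  have hLf : AbsolutelyContinuousOnInterval (L ∘ f) a b :=
    L.lipschitz.comp_absolutelyContinuousOnInterval hf
  rw [← L.intervalIntegral_comp_comm hf', map_sub]
  change _ = (L ∘ f) b - (L ∘ f) a
  rw [← hLf.integral_deriv_eq_sub]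
  refine intervalIntegral.integral_congr_ae ?_
  filter_upwards [hf.boundedVariationOn.ae_differentiableAt_of_mem_uIcc] with x hx hxab
  exact ((L.hasFDerivAt.comp_hasDerivAt x (hx (uIoc_subset_uIcc hxab)).hasDerivAt).deriv).symm

theorem LipschitzWith.norm_deriv_comp_le {E F : Type*} [NormedAddCommGroup E] [NormedSpace ℝ E]
    [NormedAddCommGroup F] [NormedSpace ℝ F] {K : ℝ≥0} {f : E → F} (hf : LipschitzWith K f)
    {ω : ℝ → E} {v : E} {t : ℝ} (hω : HasDerivAt ω v t) :
    ‖deriv (f ∘ ω) t‖ ≤ K * ‖v‖ := by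
  by_cases hd : DifferentiableAt ℝ (f ∘ ω) t
  swap
  · rw [deriv_zero_of_not_differentiableAt hd, norm_zero]
    positivity
  refine le_of_tendsto_of_tendsto' (hasDerivAt_iff_tendsto_slope.1 hd.hasDerivAt).norm
    ((hasDerivAt_iff_tendsto_slope.1 hω).norm.const_mul (K : ℝ)) fun y ↦ ?_
  simp only [slope_def_module, norm_smul, Function.comp_apply]
  rw [mul_left_comm]
  exact mul_le_mul_of_nonneg_left (by simpa [dist_eq_norm] using hf.dist_le_mul (ω y) (ω t))
    (norm_nonneg _)

namespace AbsCts

variable {m n : ℕ} {ω : ℝ → Euc m}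

theorem intervalIntegrable_deriv (hω : AbsCts ω) {a b : ℝ} (ha : a ∈ Icc (0 : ℝ) 1)
    (hb : b ∈ Icc (0 : ℝ) 1) : IntervalIntegrable (deriv ω) volume a b :=
  (hω.1.mono_set (uIcc_subset_Icc ha hb)).intervalIntegrable

theorem sub_eq_intervalIntegral (hω : AbsCts ω) {x y : ℝ} (hx : x ∈ Icc (0 : ℝ) 1)
    (hy : y ∈ Icc (0 : ℝ) 1) : ω x - ω y = ∫ s in y..x, deriv ω s := by
  have h0 : (0 : ℝ) ∈ Icc (0 : ℝ) 1 := left_mem_Icc.2 zero_le_one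
  rw [hω.2 x hx, hω.2 y hy, ← intervalIntegral.integral_of_le hx.1,
    ← intervalIntegral.integral_of_le hy.1, add_sub_add_left_eq_sub,
    intervalIntegral.integral_interval_sub_left (hω.intervalIntegrable_deriv h0 hx)
      (hω.intervalIntegrable_deriv h0 hy)]

theorem absolutelyContinuousOnInterval (hω : AbsCts ω) :
    AbsolutelyContinuousOnInterval ω 0 1 := by
  have h0 : (0 : ℝ) ∈ Icc (0 : ℝ) 1 := left_mem_Icc.2 zero_le_one
  have h1 : (1 : ℝ) ∈ Icc (0 : ℝ) 1 := right_mem_Icc.2 zero_le_one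
  refine AbsolutelyContinuousOnInterval.of_dist_le
    ((hω.intervalIntegrable_deriv h0 h1).norm.absolutelyContinuousOnInterval_intervalIntegral
      (c := 0) (by simp)) fun x hx y hy ↦ ?_
  rw [uIcc_of_le zero_le_one] at hx hy
  rw [dist_eq_norm, hω.sub_eq_intervalIntegral hx hy, Real.dist_eq,
    intervalIntegral.integral_interval_sub_left (hω.intervalIntegrable_deriv h0 hx).norm
      (hω.intervalIntegrable_deriv h0 hy).norm]
  exact intervalIntegral.norm_integral_le_abs_integral_norm

theorem ae_hasDerivAt (hω : AbsCts ω) :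
    ∀ᵐ t, t ∈ Ioo (0 : ℝ) 1 → HasDerivAt ω (deriv ω t) t := by
  have h0 : (0 : ℝ) ∈ Icc (0 : ℝ) 1 := left_mem_Icc.2 zero_le_one
  have h1 : (1 : ℝ) ∈ Icc (0 : ℝ) 1 := right_mem_Icc.2 zero_le_one
  filter_upwards [(hω.intervalIntegrable_deriv h0 h1).ae_hasDerivAt_integral] with t ht htI
  rw [uIcc_of_le zero_le_one] at ht
  refine ((ht (Ioo_subset_Icc_self htI) 0 h0).const_add (ω 0)).congr_of_eventuallyEq ?_
  filter_upwards [isOpen_Ioo.mem_nhds htI] with s hs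
  rw [hω.2 s (Ioo_subset_Icc_self hs), intervalIntegral.integral_of_le hs.1.le]

variable {K : ℝ≥0} {f : Euc m → Euc n}

theorem ae_norm_deriv_comp_le (hω : AbsCts ω) (hf : LipschitzWith K f) :
    ∀ᵐ t ∂volume.restrict (Icc (0 : ℝ) 1), ‖deriv (f ∘ ω) t‖ ≤ K * ‖deriv ω t‖ := by
  rw [← Measure.restrict_congr_set Ioo_ae_eq_Icc, ae_restrict_iff' measurableSet_Ioo]
  filter_upwards [hω.ae_hasDerivAt] with t ht htI
  exact hf.norm_deriv_comp_le (ht htI)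

theorem comp_lipschitzWith (hω : AbsCts ω) (hf : LipschitzWith K f) : AbsCts (f ∘ ω) := by
  have hint : IntegrableOn (deriv (f ∘ ω)) (Icc 0 1) :=
    (hω.1.norm.const_mul K).mono' (aestronglyMeasurable_deriv _ _)
      (hω.ae_norm_deriv_comp_le hf)
  refine ⟨hint, fun t ht ↦ ?_⟩
  have h0 : (0 : ℝ) ∈ Icc (0 : ℝ) 1 := left_mem_Icc.2 zero_le_one
  rw [← intervalIntegral.integral_of_le ht.1,
    AbsolutelyContinuousOnInterval.integral_deriv_eq_sub_of_intervalIntegrable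
      ((hf.comp_absolutelyContinuousOnInterval hω.absolutelyContinuousOnInterval).mono
        (uIcc_subset_uIcc (by simp) (by simpa [uIcc_of_le zero_le_one] using ht)))
      (hint.mono_set (uIcc_subset_Icc h0 ht)).intervalIntegrable,
    add_sub_cancel]

end AbsCts

theorem pathAction_const {n : ℕ} (c : Euc n) : pathAction (fun _ : ℝ ↦ c) = 0 := by
  have hAC : AbsCts (fun _ : ℝ ↦ c) := ⟨by simp [deriv_const'], fun t _ ↦ by simp [deriv_const']⟩
  simp [pathAction, dif_pos hAC, deriv_const']

theorem pathAction_comp_le {m n : ℕ} {K : ℝ≥0} {f : Euc m → Euc n} (hf : LipschitzWith K f)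
    (ω : ℝ → Euc m) : pathAction (f ∘ ω) ≤ (K : ℝ≥0∞) ^ 2 * pathAction ω := by
  rcases eq_or_ne K 0 with rfl | hK
  · have hconst : f ∘ ω = fun _ ↦ f (ω 0) :=
      funext fun t ↦ by simpa using hf.dist_le_mul (ω t) (ω 0)
    simp [hconst, pathAction_const]
  by_cases hω : AbsCts ω
  swap
  · simp [pathAction, dif_neg hω, hK]
  rw [pathAction, dif_pos (hω.comp_lipschitzWith hf), pathAction, dif_pos hω,
    ← lintegral_const_mul' _ _ (by simp)]
  refine lintegral_mono_ae ?_
  filter_upwards [hω.ae_norm_deriv_comp_le hf] with t ht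
  calc ENNReal.ofReal (‖deriv (f ∘ ω) t‖ ^ 2 / 2)
      ≤ ENNReal.ofReal ((K : ℝ) ^ 2 * (‖deriv ω t‖ ^ 2 / 2)) := by
        gcongr
        nlinarith [norm_nonneg (deriv (f ∘ ω) t)]
    _ = (K : ℝ≥0∞) ^ 2 * ENNReal.ofReal (‖deriv ω t‖ ^ 2 / 2) := by
        rw [ENNReal.ofReal_mul (by positivity), ENNReal.ofReal_pow K.coe_nonneg,
          ENNReal.ofReal_coe_nnreal]

open ProbabilityTheory

section Disintegration

variable {α β : Type*} [MeasurableSpace α] [MeasurableSpace β]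

theorem exists_isMarkovKernel_comp_map_eq [MeasurableEq α] [StandardBorelSpace β] [Nonempty β]
    (μ : Measure β) [IsFiniteMeasure μ] {f : β → α} (hf : Measurable f) :
    ∃ κ : Kernel α β, IsMarkovKernel κ ∧ κ ∘ₘ μ.map f = μ ∧
      ∀ᵐ a ∂μ.map f, ∀ᵐ b ∂κ a, f b = a := by
  have hg : Measurable fun b ↦ (f b, b) := hf.prodMk measurable_id
  set ρ := μ.map fun b ↦ (f b, b)
  have hρ : ρ.fst ⊗ₘ ρ.condKernel = ρ := ρ.disintegrate ρ.condKernel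
  have hfst : ρ.fst = μ.map f := by
    rw [Measure.fst, Measure.map_map measurable_fst hg]
    rfl
  refine ⟨ρ.condKernel, inferInstance, ?_, ?_⟩
  · rw [← hfst, ← Measure.snd_compProd, hρ, Measure.snd, Measure.map_map measurable_snd hg]
    exact Measure.map_id
  · have h : ∀ᵐ p ∂ρ, f p.2 = p.1 :=
      (ae_map_iff hg.aemeasurable (measurableSet_eq_fun (hf.comp measurable_snd)
        measurable_fst)).2 (ae_of_all _ fun _ ↦ rfl)
    rw [← hρ] at h
    rw [← hfst]
    exact Measure.ae_ae_of_ae_compProd h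

theorem map_fst_parallelComp_comp (κ : Kernel α β) [IsSFiniteKernel κ] (η : Kernel α β)
    [IsMarkovKernel η] (γ : Measure (α × α)) :
    ((κ ∥ₖ η) ∘ₘ γ).map Prod.fst = κ ∘ₘ γ.map Prod.fst := by
  ext s hs
  rw [Measure.map_apply measurable_fst hs, Measure.bind_apply (measurable_fst hs)
    (Kernel.aemeasurable _), Measure.bind_apply hs κ.aemeasurable,
    lintegral_map (κ.measurable_coe hs) measurable_fst]
  congr with p
  rw [Kernel.parallelComp_apply, ← Measure.map_apply measurable_fst hs, Measure.map_fst_prod,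
    measure_univ, one_smul]

theorem map_snd_parallelComp_comp (κ : Kernel α β) [IsMarkovKernel κ] (η : Kernel α β)
    [IsSFiniteKernel η] (γ : Measure (α × α)) :
    ((κ ∥ₖ η) ∘ₘ γ).map Prod.snd = η ∘ₘ γ.map Prod.snd := by
  ext s hs
  rw [Measure.map_apply measurable_snd hs, Measure.bind_apply (measurable_snd hs)
    (Kernel.aemeasurable _), Measure.bind_apply hs η.aemeasurable,
    lintegral_map (η.measurable_coe hs) measurable_snd]
  congr with p
  rw [Kernel.parallelComp_apply, ← Measure.map_apply measurable_snd hs, Measure.map_snd_prod,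
    measure_univ, one_smul]

theorem map_prodMap_parallelComp_comp {κ : Kernel α β} [IsMarkovKernel κ] {ν : Measure α}
    {f : β → α} (hf : Measurable f) (hκ : ∀ᵐ a ∂ν, ∀ᵐ b ∂κ a, f b = a)
    {γ : Measure (α × α)} (h₁ : γ.map Prod.fst = ν) (h₂ : γ.map Prod.snd = ν) :
    ((κ ∥ₖ κ) ∘ₘ γ).map (Prod.map f f) = γ := by
  have hdirac : ∀ᵐ a ∂ν, (κ a).map f = Measure.dirac a := by
    filter_upwards [hκ] with a ha
    rw [Measure.map_congr ha, Measure.map_const, measure_univ, one_smul]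
  have h₁' : ∀ᵐ p ∂γ, (κ p.1).map f = Measure.dirac p.1 :=
    ae_of_ae_map measurable_fst.aemeasurable (by rwa [h₁])
  have h₂' : ∀ᵐ p ∂γ, (κ p.2).map f = Measure.dirac p.2 :=
    ae_of_ae_map measurable_snd.aemeasurable (by rwa [h₂])
  rw [Measure.map_comp _ _ (hf.prodMap hf)]
  conv_rhs => rw [← Measure.id_comp (μ := γ)]
  refine Measure.comp_congr ?_
  filter_upwards [h₁', h₂'] with p hp₁ hp₂
  rw [Kernel.id_apply, Kernel.map_apply _ (hf.prodMap hf), Kernel.parallelComp_apply,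
    ← Measure.map_prod_map _ _ hf hf, hp₁, hp₂, Measure.dirac_prod_dirac]

end Disintegration

section Flows

variable {m n : ℕ}

theorem isPlan_parallelComp_comp {μ' : Measure (Euc m)}
    {f : Euc m → Euc n} {κ : Kernel (Euc n) (Euc m)} [IsMarkovKernel κ]
    (hκ : κ ∘ₘ μ'.map f = μ') {γ : Measure (Euc n × Euc n)} (hγ : IsPlan (μ'.map f) γ) :
    IsPlan μ' ((κ ∥ₖ κ) ∘ₘ γ) := by
  obtain ⟨_, h₁, h₂⟩ := hγ
  exact ⟨inferInstance, by rw [map_fst_parallelComp_comp, h₁, hκ],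
    by rw [map_snd_parallelComp_comp, h₂, hκ]⟩

theorem exists_isPlan_map_prodMap_eq {μ' : Measure (Euc m)} [IsFiniteMeasure μ']
    {f : Euc m → Euc n} (hf : Measurable f) {γ : Measure (Euc n × Euc n)}
    (hγ : IsPlan (μ'.map f) γ) :
    ∃ γ', IsPlan μ' γ' ∧ γ'.map (Prod.map f f) = γ := by
  obtain ⟨κ, _, hκ, hfiber⟩ := exists_isMarkovKernel_comp_map_eq μ' hf
  exact ⟨(κ ∥ₖ κ) ∘ₘ γ, isPlan_parallelComp_comp hκ hγ,
    map_prodMap_parallelComp_comp hf hfiber hγ.2.1 hγ.2.2⟩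

theorem isGenFlow_jump {μ : Measure (Euc n)} {γ : Measure (Euc n × Euc n)} (hγ : IsPlan μ γ) :
    IsGenFlow μ (idPlan μ) γ
      (γ.map fun q ↦ ((fun t ↦ if t < (1 : ℝ) then q.2 else q.1), q.2)) := by
  obtain ⟨_, h₁, h₂⟩ := hγ
  set T := fun q : Euc n × Euc n ↦ ((fun t ↦ if t < (1 : ℝ) then q.2 else q.1), q.2)
  have hpos : ∀ t : ℝ, Measurable fun q : Euc n × Euc n ↦ if t < 1 then q.2 else q.1 := fun t ↦ by
    split_ifs
    exacts [measurable_snd, measurable_fst]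
  have hT : Measurable T := (measurable_pi_lambda _ hpos).prodMk measurable_snd
  have heval : ∀ t : ℝ, Measurable fun p : (ℝ → Euc n) × Euc n ↦ p.1 t :=
    fun t ↦ (measurable_pi_apply t).comp measurable_fst
  have hend : ∀ t : ℝ, Measurable fun p : (ℝ → Euc n) × Euc n ↦ (p.1 t, p.2) :=
    fun t ↦ (heval t).prodMk measurable_snd
  have hdiag : Measurable fun x : Euc n ↦ (x, x) := measurable_id.prodMk measurable_id
  refine ⟨Measure.isProbabilityMeasure_map hT.aemeasurable, fun t _ ↦ ?_, ?_, ?_⟩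
  · rw [Measure.map_map (heval t) hT]
    by_cases ht : t < 1
    · simpa [Function.comp_def, T, ht] using h₂
    · simpa [Function.comp_def, T, ht] using h₁
  · rw [Measure.map_map (hend 0) hT, idPlan, ← h₂,
      Measure.map_map hdiag measurable_snd]
    congr 1
    funext q
    simp [T]
  · have hid : (fun p : (ℝ → Euc n) × Euc n ↦ (p.1 1, p.2)) ∘ T = id := by
      funext q
      simp [T]
    rw [Measure.map_map (hend 1) hT, hid, Measure.map_id]

theorem idPlan_map {f : Euc m → Euc n} (hf : Measurable f) (μ' : Measure (Euc m)) :
    (idPlan μ').map (Prod.map f f) = idPlan (μ'.map f) := by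
  have hdiag : ∀ k, Measurable fun x : Euc k ↦ (x, x) := fun _ ↦ measurable_id.prodMk measurable_id
  rw [idPlan, idPlan, Measure.map_map (hf.prodMap hf) (hdiag m), Measure.map_map (hdiag n) hf]
  rfl

theorem measurable_prodMap_comp_left {f : Euc m → Euc n} (hf : Measurable f) :
    Measurable (Prod.map (fun ω : ℝ → Euc m ↦ f ∘ ω) f) :=
  (measurable_pi_lambda _ fun t ↦ hf.comp (measurable_pi_apply t)).prodMap hf

theorem IsGenFlow.map {μ' : Measure (Euc m)} {f : Euc m → Euc n} (hf : Measurable f)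
    {η' γ' : Measure (Euc m × Euc m)} {P' : Measure ((ℝ → Euc m) × Euc m)}
    (hP' : IsGenFlow μ' η' γ' P') :
    IsGenFlow (μ'.map f) (η'.map (Prod.map f f)) (γ'.map (Prod.map f f))
      (P'.map (Prod.map (fun ω ↦ f ∘ ω) f)) := by
  obtain ⟨_, hmarg, h₀, h₁⟩ := hP'
  have hF := measurable_prodMap_comp_left hf
  have heval : ∀ k (t : ℝ), Measurable fun p : (ℝ → Euc k) × Euc k ↦ p.1 t :=
    fun _ t ↦ (measurable_pi_apply t).comp measurable_fst
  have hend : ∀ k (t : ℝ), Measurable fun p : (ℝ → Euc k) × Euc k ↦ (p.1 t, p.2) :=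
    fun k t ↦ (heval k t).prodMk measurable_snd
  refine ⟨Measure.isProbabilityMeasure_map hF.aemeasurable, fun t ht ↦ ?_, ?_, ?_⟩
  · rw [Measure.map_map (heval n t) hF, ← hmarg t ht, Measure.map_map hf (heval m t)]
    rfl
  · rw [Measure.map_map (hend n 0) hF, ← h₀, Measure.map_map (hf.prodMap hf) (hend m 0)]
    rfl
  · rw [Measure.map_map (hend n 1) hF, ← h₁, Measure.map_map (hf.prodMap hf) (hend m 1)]
    rfl

theorem flowAction_map_le {K : ℝ≥0} {f : Euc m → Euc n} (hf : LipschitzWith K f)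
    (P' : Measure ((ℝ → Euc m) × Euc m)) :
    flowAction (P'.map (Prod.map (fun ω ↦ f ∘ ω) f)) ≤ (K : ℝ≥0∞) ^ 2 * flowAction P' :=
  calc flowAction (P'.map (Prod.map (fun ω ↦ f ∘ ω) f))
      ≤ ∫⁻ p, pathAction (f ∘ p.1) ∂P' := lintegral_map_le _ _
    _ ≤ ∫⁻ p, (K : ℝ≥0∞) ^ 2 * pathAction p.1 ∂P' :=
        lintegral_mono fun p ↦ pathAction_comp_le hf p.1
    _ = (K : ℝ≥0∞) ^ 2 * flowAction P' := lintegral_const_mul' _ _ (by simp)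

theorem deltaSq_map_le {μ' : Measure (Euc m)} {K : ℝ≥0} {f : Euc m → Euc n}
    (hf : LipschitzWith K f) {γ' : Measure (Euc m × Euc m)} (hγ' : IsPlan μ' γ') :
    deltaSq (μ'.map f) (idPlan (μ'.map f)) (γ'.map (Prod.map f f)) ≤
      (K : ℝ≥0∞) ^ 2 * deltaSq μ' (idPlan μ') γ' := by
  -- without a flow the right side would be `K ^ 2 * ⊤`, which is `0` when `K = 0`
  have : Nonempty {P // IsGenFlow μ' (idPlan μ') γ' P} := ⟨⟨_, isGenFlow_jump hγ'⟩⟩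
  rw [deltaSq, deltaSq, ENNReal.mul_iInf (by simp)]
  refine le_iInf fun P' ↦ iInf_le_of_le ⟨_, ?_⟩ (flowAction_map_le hf P'.1)
  simpa [idPlan_map hf.continuous.measurable] using P'.2.map hf.continuous.measurable

end Flows

theorem sup_deltaSq_le_lipschitz_general {m n : ℕ}
    (μ' : Measure (Euc m)) [IsProbabilityMeasure μ']
    (μ : Measure (Euc n))
    (f : Euc m → Euc n) (K : ℝ≥0) (hfL : LipschitzWith K f)
    (hfp : μ'.map f = μ) :
    (⨆ γ : {γ : Measure (Euc n × Euc n) // IsPlan μ γ}, deltaSq μ (idPlan μ) γ.1) ≤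
      (K : ℝ≥0∞) ^ 2 *
        ⨆ γ' : {γ' : Measure (Euc m × Euc m) // IsPlan μ' γ'}, deltaSq μ' (idPlan μ') γ'.1 := by
  subst hfp
  refine iSup_le fun ⟨γ, hγ⟩ ↦ ?_
  obtain ⟨γ', hγ', rfl⟩ := exists_isPlan_map_prodMap_eq hfL.continuous.measurable hγ
  exact (deltaSq_map_le hfL hγ').trans
    (mul_le_mul_right (le_iSup (fun γ'' : {γ'' // IsPlan μ' γ''} ↦ deltaSq μ' (idPlan μ') γ''.1)
      ⟨γ', hγ'⟩) _)

/-- **Transfer of the diameter bound through a Lipschitz measure-preserving map**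
(Theorem `bendi`): `sup_{γ ∈ Γ(D)} δ̄_D(γ_i, γ) ≤ Lip(f) · sup_{γ' ∈ Γ(D')} δ̄_{D'}(γ_i, γ')`
(stated for the squared distances, with factor `Lip(f)²`). -/
theorem sup_deltaSq_le_lipschitz {m n : ℕ}
    (D' : Set (Euc m)) (D : Set (Euc n)) (hD' : IsCompact D') (hD : IsCompact D)
    (μ' : Measure (Euc m)) [IsProbabilityMeasure μ']
    (μ : Measure (Euc n)) [IsProbabilityMeasure μ]
    (hμ' : ∀ᵐ x ∂μ', x ∈ D') (hμ : ∀ᵐ x ∂μ, x ∈ D)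
    (f : Euc m → Euc n) (K : ℝ≥0) (hfL : LipschitzWith K f) (hfD : MapsTo f D' D)
    (hfp : μ'.map f = μ) :
    (⨆ γ : {γ : Measure (Euc n × Euc n) // IsPlan μ γ}, deltaSq μ (idPlan μ) γ.1) ≤
      (K : ℝ≥0∞) ^ 2 *
        ⨆ γ' : {γ' : Measure (Euc m × Euc m) // IsPlan μ' γ'}, deltaSq μ' (idPlan μ') γ'.1 :=
  sup_deltaSq_le_lipschitz_general μ' μ f K hfL hfp
end
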